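/- arXiv:2404.09215 — 5 statements merged into one kernel-verified Lean document; each statement's English description precedes it below -/
import Mathlib

section
/- Let z₁,…,zₙ be nonzero complex numbers and let w̃ ∈ {1,-1}ⁿ maximize |∑ᵢ wᵢ zᵢ| over all w ∈ {1,-1}ⁿ, with s̃ = ∑ᵢ w̃ᵢ zᵢ ≠ 0. Then no zᵢ lies on the line through the origin perpendicular to s̃, i.e., Re(s̃ · conj(zᵢ)) ≠ 0 for all i. -/
/-!
Flipping the sign of `w̃ᵢ` replaces `s̃` by `s̃ - 2 w̃ᵢ zᵢ`. If `zᵢ` were orthogonal to `s̃`, then by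
Pythagoras this new sum would be strictly longer than `s̃`, contradicting the optimality of `w̃`.
-/

open scoped InnerProductSpace

theorem norm_lt_norm_sub_of_inner_eq_zero {E : Type*} [NormedAddCommGroup E]
    [InnerProductSpace ℝ E] {x y : E} (h : ⟪x, y⟫_ℝ = 0) (hy : y ≠ 0) : ‖x‖ < ‖x - y‖ := by
  have hsq : ‖x‖ ^ 2 < ‖x - y‖ ^ 2 := by
    rw [norm_sub_sq_real, h]
    nlinarith [norm_pos_iff.mpr hy]
  exact (pow_lt_pow_iff_left₀ (norm_nonneg _) (norm_nonneg _) two_ne_zero).mp hsq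

theorem sum_update_neg_mul {ι : Type*} [Fintype ι] [DecidableEq ι] (w : ι → ℝ) (z : ι → ℂ)
    (i : ι) :
    ∑ j, (Function.update w i (-w i) j : ℂ) * z j = ∑ j, (w j : ℂ) * z j - 2 * w i * z i := by
  rw [← Finset.add_sum_erase _ _ (Finset.mem_univ i),
    ← Finset.add_sum_erase _ _ (Finset.mem_univ i)]
  have hrest : ∀ j ∈ Finset.univ.erase i, (Function.update w i (-w i) j : ℂ) * z j
      = (w j : ℂ) * z j := fun j hj => by
    rw [Function.update_of_ne (Finset.ne_of_mem_erase hj)]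
  rw [Finset.sum_congr rfl hrest, Function.update_self]
  push_cast
  ring

theorem update_neg_eq_one_or_eq_neg_one {ι : Type*} [DecidableEq ι] {w : ι → ℝ}
    (hw : ∀ i, w i = 1 ∨ w i = -1) (i j : ι) :
    Function.update w i (-w i) j = 1 ∨ Function.update w i (-w i) j = -1 := by
  rcases eq_or_ne j i with rfl | hji
  · rw [Function.update_self]
    rcases hw j with h | h <;> simp [h]
  · rw [Function.update_of_ne hji]
    exact hw j

theorem stmt1_general (n : ℕ) (z : Fin n → ℂ) (hz : ∀ i, z i ≠ 0)
    (w : Fin n → ℝ) (hw : ∀ i, w i = 1 ∨ w i = -1)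
    (hopt : ∀ v : Fin n → ℝ, (∀ i, v i = 1 ∨ v i = -1) →
      ‖∑ i, (v i : ℂ) * z i‖ ≤ ‖∑ i, (w i : ℂ) * z i‖) :
    ∀ i, ((∑ j, (w j : ℂ) * z j) * (starRingEnd ℂ) (z i)).re ≠ 0 := by
  intro i hre
  set s := ∑ j, (w j : ℂ) * z j
  have horth : ⟪s, 2 * w i * z i⟫_ℝ = 0 := by
    rw [show (2 * w i * z i : ℂ) = (2 * w i) • z i by rw [Complex.real_smul]; push_cast; ring,
      real_inner_smul_right, real_inner_comm, Complex.inner, hre, mul_zero]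
  have hflip : ‖s‖ < ‖s - 2 * w i * z i‖ :=
    norm_lt_norm_sub_of_inner_eq_zero horth
      (mul_ne_zero (by rcases hw i with h | h <;> simp [h]) (hz i))
  have hle := hopt _ (update_neg_eq_one_or_eq_neg_one hw i)
  rw [sum_update_neg_mul] at hle
  exact hle.not_gt hflip

theorem stmt1 (n : ℕ) (z : Fin n → ℂ) (hz : ∀ i, z i ≠ 0)
    (w : Fin n → ℝ) (hw : ∀ i, w i = 1 ∨ w i = -1)
    (hopt : ∀ v : Fin n → ℝ, (∀ i, v i = 1 ∨ v i = -1) →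
      ‖∑ i, (v i : ℂ) * z i‖ ≤ ‖∑ i, (w i : ℂ) * z i‖)
    (hs : (∑ i, (w i : ℂ) * z i) ≠ 0) :
    ∀ i, ((∑ j, (w j : ℂ) * z j) * (starRingEnd ℂ) (z i)).re ≠ 0 :=
  stmt1_general n z hz w hw hopt
end

section
/- Let z₁,…,zₙ be nonzero complex numbers and let w̃ ∈ {1,-1}ⁿ maximize |∑ᵢ wᵢ zᵢ| over all w ∈ {1,-1}ⁿ, with s̃ = ∑ᵢ w̃ᵢ zᵢ. If Re(s̃ · conj(zⱼ)) > 0 then w̃ⱼ = 1, and if Re(s̃ · conj(zⱼ)) < 0 then w̃ⱼ = -1. -/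
/-!
Flipping the sign of `w j` replaces `s = ∑ wᵢ zᵢ` by `s - 2 wⱼ zⱼ`, and
`‖s - 2 wⱼ zⱼ‖² = ‖s‖² - 4 wⱼ ⟪zⱼ, s⟫ + 4 ‖zⱼ‖²`. Optimality of `w` forces this to be at most
`‖s‖²`, so `wⱼ ⟪zⱼ, s⟫ ≥ ‖zⱼ‖² > 0`; over `ℂ`, `⟪zⱼ, s⟫_ℝ = Re (s · conj zⱼ)`.
-/

open RealInnerProductSpace

theorem norm_sq_le_inner_of_norm_sub_two_smul_le {E : Type*} [NormedAddCommGroup E]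
    [InnerProductSpace ℝ E] {s a : E} (h : ‖s - (2 : ℝ) • a‖ ≤ ‖s‖) : ‖a‖ ^ 2 ≤ ⟪a, s⟫ := by
  have hsq : ‖s - (2 : ℝ) • a‖ ^ 2 ≤ ‖s‖ ^ 2 := pow_le_pow_left₀ (norm_nonneg _) h 2
  rw [norm_sub_sq_real, real_inner_smul_right, norm_smul, real_inner_comm] at hsq
  norm_num at hsq
  nlinarith

theorem Finset.sum_update_smul {ι R M : Type*} [Fintype ι] [DecidableEq ι] [Ring R]
    [AddCommGroup M] [Module R M] (w : ι → R) (z : ι → M) (j : ι) (c : R) :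
    ∑ i, Function.update w j c i • z i = ∑ i, w i • z i + (c - w j) • z j := by
  have hterm : ∀ i, Function.update w j c i • z i
      = w i • z i + Function.update (0 : ι → M) j ((c - w j) • z j) i := by
    intro i
    rcases eq_or_ne i j with rfl | hij
    · simp only [Function.update_self, sub_smul]
      abel
    · simp only [Function.update_of_ne hij, Pi.zero_apply, add_zero]
  simp only [hterm, Finset.sum_add_distrib, Finset.sum_update_of_mem (Finset.mem_univ j),
    Pi.zero_apply, Finset.sum_const_zero, add_zero]

theorem norm_sq_le_mul_inner_of_isMaxOn_signed_sum {ι E : Type*} [Fintype ι] [DecidableEq ι]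
    [NormedAddCommGroup E] [InnerProductSpace ℝ E] (z : ι → E) (w : ι → ℝ)
    (hw : ∀ i, w i = 1 ∨ w i = -1)
    (hopt : ∀ v : ι → ℝ, (∀ i, v i = 1 ∨ v i = -1) → ‖∑ i, v i • z i‖ ≤ ‖∑ i, w i • z i‖)
    (j : ι) : ‖z j‖ ^ 2 ≤ w j * ⟪z j, ∑ i, w i • z i⟫ := by
  have hwj : |w j| = 1 := by rcases hw j with h | h <;> simp [h]
  have hflip : ∀ i, Function.update w j (-w j) i = 1 ∨ Function.update w j (-w j) i = -1 := by
    intro i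
    rcases eq_or_ne i j with rfl | hij
    · rcases hw i with h | h <;> simp [h]
    · simpa only [Function.update_of_ne hij] using hw i
  have hsum : ∑ i, Function.update w j (-w j) i • z i
      = ∑ i, w i • z i - (2 : ℝ) • (w j • z j) := by
    rw [Finset.sum_update_smul]
    module
  have h := norm_sq_le_inner_of_norm_sub_two_smul_le (hsum ▸ hopt _ hflip)
  rwa [norm_smul, Real.norm_eq_abs, hwj, one_mul, real_inner_smul_left] at h

theorem stmt2 (n : ℕ) (z : Fin n → ℂ) (hz : ∀ i, z i ≠ 0)
    (w : Fin n → ℝ) (hw : ∀ i, w i = 1 ∨ w i = -1)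
    (hopt : ∀ v : Fin n → ℝ, (∀ i, v i = 1 ∨ v i = -1) →
      ‖∑ i, (v i : ℂ) * z i‖ ≤ ‖∑ i, (w i : ℂ) * z i‖)
    (j : Fin n) :
    (0 < ((∑ i, (w i : ℂ) * z i) * (starRingEnd ℂ) (z j)).re → w j = 1) ∧
    (((∑ i, (w i : ℂ) * z i) * (starRingEnd ℂ) (z j)).re < 0 → w j = -1) := by
  simp only [← Complex.real_smul] at hopt ⊢
  have hkey := norm_sq_le_mul_inner_of_isMaxOn_signed_sum z w hw hopt j
  rw [Complex.inner] at hkey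
  have hzj : 0 < ‖z j‖ ^ 2 := by positivity [hz j]
  constructor
  · intro hpos
    rcases hw j with h | h
    · exact h
    · rw [h] at hkey; linarith
  · intro hneg
    rcases hw j with h | h
    · rw [h] at hkey; linarith
    · exact h
end

section
/- Let z₁,…,zₙ be nonzero complex numbers and w̃ ∈ {1,-1}ⁿ be optimal for maximizing |∑ᵢ wᵢ zᵢ| with nonzero optimal value. Then there exists a unit complex number u such that for each i, w̃ᵢ = 1 if Re(u · conj(zᵢ)) > 0, w̃ᵢ = -1 if Re(u · conj(zᵢ)) < 0, and Re(u · conj(zᵢ)) ≠ 0 for all i. (Existence of a separating line through the origin.) -/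
/-!
Put `S = ∑ wᵢ zᵢ`. Flipping the sign of `wᵢ` changes the sum to `S - 2 wᵢ zᵢ`, and
`‖S - 2 wᵢ zᵢ‖² = ‖S‖² - 4 wᵢ Re(S z̄ᵢ) + 4 ‖zᵢ‖²`, so optimality of `w` forces
`0 < ‖zᵢ‖² ≤ wᵢ Re(S z̄ᵢ)`. Hence `u = S / ‖S‖` separates the `zᵢ` according to the signs `wᵢ`.
-/

open Complex ComplexConjugate

theorem Complex.sq_norm_sub_ofReal_mul (S z : ℂ) (t : ℝ) :
    ‖S - t * z‖ ^ 2 = ‖S‖ ^ 2 - 2 * t * (S * conj z).re + t ^ 2 * ‖z‖ ^ 2 := by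
  simp only [Complex.sq_norm, normSq_sub, normSq_ofReal, map_mul, conj_ofReal,
    re_ofReal_mul, mul_left_comm S]
  ring

theorem Complex.sq_norm_le_sign_mul_re {S z : ℂ} {s : ℝ} (hs : s = 1 ∨ s = -1)
    (h : ‖S - 2 * s * z‖ ≤ ‖S‖) : ‖z‖ ^ 2 ≤ s * (S * conj z).re := by
  have hsq : s ^ 2 = 1 := by rcases hs with rfl | rfl <;> norm_num
  have h2 := pow_le_pow_left₀ (norm_nonneg _) h 2
  rw [← ofReal_ofNat, ← ofReal_mul, sq_norm_sub_ofReal_mul] at h2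
  nlinarith

theorem Fintype.sum_update_mul {ι : Type*} [Fintype ι] [DecidableEq ι] (w : ι → ℝ) (z : ι → ℂ)
    (i : ι) (b : ℝ) :
    ∑ j, (Function.update w i b j : ℂ) * z j = ∑ j, (w j : ℂ) * z j + (b - w i) * z i := by
  simp only [← Finset.add_sum_erase _ _ (Finset.mem_univ i), Function.update_self]
  rw [Finset.sum_congr rfl fun j hj => by rw [Function.update_of_ne (Finset.ne_of_mem_erase hj)]]
  ring

theorem update_neg_eq_one_or_neg_one {ι : Type*} [DecidableEq ι] {w : ι → ℝ}
    (hw : ∀ j, w j = 1 ∨ w j = -1) (i j : ι) :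
    Function.update w i (-w i) j = 1 ∨ Function.update w i (-w i) j = -1 := by
  rcases eq_or_ne j i with rfl | hji
  · rw [Function.update_self]; rcases hw j with h | h <;> simp [h]
  · rw [Function.update_of_ne hji]; exact hw j

theorem eq_one_of_mul_pos_of_pos {s r : ℝ} (hs : s = 1 ∨ s = -1) (h : 0 < s * r) (hr : 0 < r) :
    s = 1 :=
  hs.resolve_right fun h' => by nlinarith

theorem eq_neg_one_of_mul_pos_of_neg {s r : ℝ} (hs : s = 1 ∨ s = -1) (h : 0 < s * r)
    (hr : r < 0) : s = -1 :=
  hs.resolve_left fun h' => by nlinarith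

theorem stmt3 (n : ℕ) (z : Fin n → ℂ) (hz : ∀ i, z i ≠ 0)
    (w : Fin n → ℝ) (hw : ∀ i, w i = 1 ∨ w i = -1)
    (hopt : ∀ v : Fin n → ℝ, (∀ i, v i = 1 ∨ v i = -1) →
      ‖∑ i, (v i : ℂ) * z i‖ ≤ ‖∑ i, (w i : ℂ) * z i‖)
    (hs : (∑ i, (w i : ℂ) * z i) ≠ 0) :
    ∃ u : ℂ, ‖u‖ = 1 ∧
      (∀ i, (u * (starRingEnd ℂ) (z i)).re ≠ 0) ∧
      (∀ i, 0 < (u * (starRingEnd ℂ) (z i)).re → w i = 1) ∧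
      (∀ i, (u * (starRingEnd ℂ) (z i)).re < 0 → w i = -1) := by
  set S := ∑ i, (w i : ℂ) * z i
  have hS : 0 < ‖S‖ := norm_pos_iff.2 hs
  have hflip (i : Fin n) : 0 < w i * (S * conj (z i)).re := by
    refine (pow_pos (norm_pos_iff.2 (hz i)) 2).trans_le (sq_norm_le_sign_mul_re (hw i) ?_)
    convert hopt _ (update_neg_eq_one_or_neg_one hw i) using 2
    rw [Fintype.sum_update_mul]
    push_cast
    ring
  have hsep (i : Fin n) : 0 < w i * (S / ‖S‖ * conj (z i)).re := by
    rw [div_mul_eq_mul_div, div_ofReal_re, mul_div_assoc']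
    exact div_pos (hflip i) hS
  refine ⟨S / ‖S‖, ?_, fun i => right_ne_zero_of_mul (hsep i).ne',
    fun i => eq_one_of_mul_pos_of_pos (hw i) (hsep i),
    fun i => eq_neg_one_of_mul_pos_of_neg (hw i) (hsep i)⟩
  rw [norm_div, norm_real, Real.norm_of_nonneg hS.le, div_self hS.ne']
end

section
/- For the triangular lattice with φ₀ = 0 and φ_in = π, suppose even integers a, b and angles θ*, φ* satisfy 2 sinθ_in + sinθ₀ + a = −sinθ* cosφ* and (−a+2b)/√3 = −sinθ* sinφ*, with θ_in, θ₀, θ* ∈ (−π/2, π/2). Then a = b = 0. Consequently, the equations reduce to 2 sinθ_in + sinθ₀ = −sinθ* cosφ* and sinθ* sinφ* = 0. -/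
/-! Both equations bound an even integer combination of `a, b` by a product of sines and cosines.
The second gives `|-a + 2b| ≤ √3 < 2`, so the even integer `-a + 2b` vanishes and `a = 2b` is a
multiple of `4`. The first gives `|a| ≤ 1 + 2|sin θ_in| + |sin θ₀| < 4`, the inequality being strict
because `θ_in, θ₀` stay away from `±π/2`; hence `a = 0`. -/

open Real

lemma abs_sin_lt_one_of_mem_Ioo {x : ℝ} (hx : x ∈ Set.Ioo (-(π / 2)) (π / 2)) : |sin x| < 1 := by
  rw [← sq_lt_one_iff_abs_lt_one]
  nlinarith [sin_sq_add_cos_sq x, cos_pos_of_mem_Ioo hx]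

lemma abs_sin_mul_le_one (x : ℝ) {y : ℝ} (hy : |y| ≤ 1) : |sin x * y| ≤ 1 := by
  rw [abs_mul]
  exact mul_le_one₀ (abs_sin_le_one x) (abs_nonneg y) hy

lemma Int.eq_zero_of_dvd_of_abs_cast_lt {m n : ℤ} (hmn : m ∣ n) (hn : |(n : ℝ)| < m) : n = 0 :=
  Int.eq_zero_of_abs_lt_dvd hmn (by exact_mod_cast hn)

theorem stmt17_general (a b : ℤ) (ha : Even a) (hb : Even b) (θin θ₀ θs φs : ℝ)
    (hin : θin ∈ Set.Ioo (-(Real.pi / 2)) (Real.pi / 2))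
    (h₀ : θ₀ ∈ Set.Ioo (-(Real.pi / 2)) (Real.pi / 2))
    (heq1 : 2 * Real.sin θin + Real.sin θ₀ + a = -(Real.sin θs * Real.cos φs))
    (heq2 : (-(a : ℝ) + 2 * b) / Real.sqrt 3 = -(Real.sin θs * Real.sin φs)) :
    a = 0 ∧ b = 0 ∧
    2 * Real.sin θin + Real.sin θ₀ = -(Real.sin θs * Real.cos φs) ∧
    Real.sin θs * Real.sin φs = 0 := by
  have hsqrt3 : (0 : ℝ) < √3 := by positivity
  have hsqrt3_lt : √3 < 2 := by rw [sqrt_lt' two_pos]; norm_num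
  have hsin := abs_sin_mul_le_one θs (abs_sin_le_one φs)
  have hcos := abs_sin_mul_le_one θs (abs_cos_le_one φs)
  have hcomb : ((-a + 2 * b : ℤ) : ℝ) = -(√3 * (sin θs * sin φs)) := by
    push_cast
    rw [div_eq_iff hsqrt3.ne'] at heq2
    linarith
  have hab : -a + 2 * b = 0 := by
    refine Int.eq_zero_of_dvd_of_abs_cast_lt ((ha.neg.add (even_two_mul b)).two_dvd) ?_
    rw [hcomb, abs_neg, abs_mul, abs_of_pos hsqrt3]
    push_cast
    nlinarith
  have ha4 : (4 : ℤ) ∣ a := by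
    obtain ⟨c, rfl⟩ := hb
    exact ⟨c, by omega⟩
  have ha0 : a = 0 := by
    refine Int.eq_zero_of_dvd_of_abs_cast_lt ha4 ?_
    obtain ⟨hin₁, hin₂⟩ := abs_lt.mp (abs_sin_lt_one_of_mem_Ioo hin)
    obtain ⟨h₀₁, h₀₂⟩ := abs_lt.mp (abs_sin_lt_one_of_mem_Ioo h₀)
    obtain ⟨hcos₁, hcos₂⟩ := abs_le.mp hcos
    push_cast
    exact abs_lt.mpr ⟨by linarith, by linarith⟩
  have hb0 : b = 0 := by omega
  subst ha0 hb0
  refine ⟨rfl, rfl, by simpa using heq1, ?_⟩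
  simpa [hsqrt3.ne'] using hcomb.symm

theorem stmt17 (a b : ℤ) (ha : Even a) (hb : Even b) (θin θ₀ θs φs : ℝ)
    (hin : θin ∈ Set.Ioo (-(Real.pi / 2)) (Real.pi / 2))
    (h₀ : θ₀ ∈ Set.Ioo (-(Real.pi / 2)) (Real.pi / 2))
    (hs : θs ∈ Set.Ioo (-(Real.pi / 2)) (Real.pi / 2))
    (heq1 : 2 * Real.sin θin + Real.sin θ₀ + a = -(Real.sin θs * Real.cos φs))
    (heq2 : (-(a : ℝ) + 2 * b) / Real.sqrt 3 = -(Real.sin θs * Real.sin φs)) :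
    a = 0 ∧ b = 0 ∧
    2 * Real.sin θin + Real.sin θ₀ = -(Real.sin θs * Real.cos φs) ∧
    Real.sin θs * Real.sin φs = 0 :=
  stmt17_general a b ha hb θin θ₀ θs φs hin h₀ heq1 heq2
end

section
/- For the triangular lattice with φ₀ = 0, φ_in = π, if −2 sinθ_in − sinθ₀ > 1 (equivalently sinθ₀ < −2 sinθ_in − 1), then there exist no θ*, φ* and even integers a, b satisfying the triangular-lattice grating lobe equations 2 sinθ_in + sinθ₀ + a = −sinθ* cosφ* and (−a+2b)/√3 = −sinθ* sinφ*. -/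
theorem stmt18 (θin θ₀ : ℝ)
    (hin : θin ∈ Set.Ioo (-(Real.pi / 2)) (Real.pi / 2))
    (h₀ : θ₀ ∈ Set.Ioo (-(Real.pi / 2)) (Real.pi / 2))
    (hgt : -2 * Real.sin θin - Real.sin θ₀ > 1) :
    ¬ ∃ (θs φs : ℝ) (a b : ℤ), θs ∈ Set.Ioo (-(Real.pi / 2)) (Real.pi / 2) ∧
      Even a ∧ Even b ∧
      2 * Real.sin θin + Real.sin θ₀ + a = -(Real.sin θs * Real.cos φs) ∧
      (-(a : ℝ) + 2 * b) / Real.sqrt 3 = -(Real.sin θs * Real.sin φs) := by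
  rintro ⟨θs, φs, a, b, hθs, ha, hb, h1, h2⟩
  have hsin_in : -1 < Real.sin θin := by
    have := Real.sin_lt_sin_of_lt_of_le_pi_div_two (x := -(Real.pi/2)) (y := θin)
      le_rfl (le_of_lt hin.2) hin.1
    simpa using this
  have hsin_0 : -1 < Real.sin θ₀ := by
    have := Real.sin_lt_sin_of_lt_of_le_pi_div_two (x := -(Real.pi/2)) (y := θ₀)
      le_rfl (le_of_lt h₀.2) h₀.1
    simpa using this
  set S := 2 * Real.sin θin + Real.sin θ₀ with hS
  clear_value S
  have hSlt : S < -1 := by rw [hS]; linarith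
  have hSgt : -3 < S := by rw [hS]; linarith
  -- x² + y² = sin²θs ≤ 1
  have hs1 : Real.sin θs ≤ 1 := Real.sin_le_one _
  have hs2 : -1 ≤ Real.sin θs := Real.neg_one_le_sin _
  have hsq : (S + a)^2 + ((-(a:ℝ) + 2*b) / Real.sqrt 3)^2 ≤ 1 := by
    rw [h1, h2]
    have hpyth : Real.sin φs ^ 2 + Real.cos φs ^ 2 = 1 := Real.sin_sq_add_cos_sq φs
    have : (-(Real.sin θs * Real.cos φs))^2 + (-(Real.sin θs * Real.sin φs))^2
        = Real.sin θs ^ 2 := by ring_nf; nlinarith [hpyth]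
    rw [this]
    nlinarith
  have h3 : (0:ℝ) < Real.sqrt 3 := Real.sqrt_pos.mpr (by norm_num)
  have h3sq : (Real.sqrt 3)^2 = 3 := Real.sq_sqrt (by norm_num)
  -- second coordinate squared ≤ 1, so (-a+2b)² ≤ 3
  have hy : ((-(a:ℝ) + 2*b))^2 ≤ 3 := by
    have hle : ((-(a:ℝ) + 2*b) / Real.sqrt 3)^2 ≤ 1 := by nlinarith [sq_nonneg (S + (a:ℝ))]
    rw [div_pow, h3sq] at hle
    linarith [(div_le_one (by norm_num : (0:ℝ) < 3)).mp hle]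
  have hyZ : ((-a + 2*b : ℤ))^2 ≤ 3 := by exact_mod_cast (by push_cast; linarith : ((-a + 2*b : ℤ):ℝ)^2 ≤ 3)
  have hm0 : -a + 2*b = 0 := by
    rcases ha with ⟨k, hk⟩
    subst hk
    rcases eq_or_ne b k with h | h
    · omega
    · nlinarith [Int.one_le_abs (sub_ne_zero.mpr h), sq_abs (b - k)]
  have hab : a = 2*b := by omega
  rcases hb with ⟨c, hc⟩
  have hcc : a = 4*c := by omega
  have hx : (S + (a:ℝ))^2 ≤ 1 := by
    have h0 := sq_nonneg ((-(a:ℝ) + 2*(b:ℝ)) / Real.sqrt 3)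
    push_cast at hsq ⊢
    push_cast at h0
    linarith
  have haR : (a:ℝ) = 4*c := by exact_mod_cast congrArg (Int.cast : ℤ → ℝ) hcc
  rw [haR] at hx
  have hxa : (-1:ℝ) ≤ S + 4*c ∧ S + 4*(c:ℝ) ≤ 1 :=
    ⟨by nlinarith [hx, sq_nonneg (S + 4*(c:ℝ) + 1)], by nlinarith [hx, sq_nonneg (S + 4*(c:ℝ) - 1)]⟩
  have hcpos : 0 < c := by
    have hcr : (0:ℝ) < (c:ℝ) := by linarith [hxa.1]
    exact_mod_cast hcr
  have : (1:ℝ) ≤ (c:ℝ) := by exact_mod_cast hcpos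
  linarith [hxa.2]
end
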